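/- arXiv:1705.02303 — 5 statements merged into one kernel-verified Lean document; each statement's English description precedes it below -/
import Mathlib

section
/- Saddle-point / robust feasibility (Propositions 2 and 3 combined): Let N_a ≥ 1, σ_w > 0, γ_w > 0, and let Q be an N_a×N_a complex Hermitian positive semidefinite matrix and c ≥ 0 a real number. Then the following are equivalent: (i) D(W, Q) ≤ c for every N_a×N_a complex Hermitian positive semidefinite matrix W with γ_w·1 − W positive semidefinite; (ii) D(γ_w·1, Q) ≤ c. Consequently, the supremum of any rate functional of Q over the set of Q that are feasible simultaneously for all such W equals its supremum over the set of Q feasible for W = γ_w·1. -/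
open Matrix
open scoped ComplexOrder

/-- The detection (relative-entropy) functional at Willie:
`D(W, Q) = log (det (1 + σ_w⁻² W Q)).re + ((1 + σ_w⁻² W Q)⁻¹.trace).re − N_a`. -/
noncomputable def Dfun {Na : ℕ} (σw : ℝ) (W Q : Matrix (Fin Na) (Fin Na) ℂ) : ℝ :=
  Real.log ((1 + (σw ^ 2)⁻¹ • (W * Q)).det.re)
    + (((1 + (σw ^ 2)⁻¹ • (W * Q))⁻¹).trace).re - Na

/-! Writing `Q = Rᴴ R`, Sylvester's determinant identity and its trace analogue turn `D(W, Q)`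
into `f (1 + σ_w⁻² R W Rᴴ) - N_a`, where `f M = log det M + tr M⁻¹`. This `f` is monotone in the
Loewner order on `M ≥ 1`: for `M' = M + Sᴴ S`, the matrix determinant lemma and the Woodbury
identity split `f M' - f M` into `f (1 + Y) - dim Y`, with `Y = S M⁻¹ Sᴴ`, which is nonnegative
because `log x + 1/x ≥ 1` on the eigenvalues, plus the trace of a product of two positive
semidefinite matrices, the second one coming from `M⁻¹ - M⁻² = M⁻¹ (M - 1) M⁻¹ ≥ 0`.
So `D(·, Q)` is monotone on the positive semidefinite cone, and `W ≤ γ_w 1` is tightest at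
`W = γ_w 1`. -/

namespace Matrix

variable {m n : Type*} [Fintype m] [DecidableEq m] [Fintype n] [DecidableEq n]

theorem inv_one_add_mul_self {R : Type*} [CommRing R] {A : Matrix n n R}
    (hA : IsUnit (1 + A).det) : (1 + A)⁻¹ * A = 1 - (1 + A)⁻¹ := by
  rw [eq_sub_iff_add_eq, ← mul_add_one, add_comm A, nonsing_inv_mul _ hA]

theorem trace_inv_one_add_mul_comm {R : Type*} [CommRing R] (A B : Matrix n n R) :
    (1 + A * B)⁻¹.trace = (1 + B * A)⁻¹.trace := by
  by_cases hAB : IsUnit (1 + A * B).det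
  · have hBA : IsUnit (1 + B * A).det := det_one_add_mul_comm A B ▸ hAB
    have hinv : (1 + A * B)⁻¹ = 1 - A * (1 + B * A)⁻¹ * B := by
      simpa using add_mul_mul_inv_eq_sub 1 A 1 B isUnit_one isUnit_one
        (by simpa using (isUnit_iff_isUnit_det _).mpr hBA)
    rw [hinv, trace_sub, trace_mul_cycle, trace_mul_comm, inv_one_add_mul_self hBA, trace_sub,
      sub_sub_cancel]
  · have hBA : ¬IsUnit (1 + B * A).det := det_one_add_mul_comm A B ▸ hAB
    rw [nonsing_inv_apply_not_isUnit _ hAB, nonsing_inv_apply_not_isUnit _ hBA]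

variable {𝕜 : Type*} [RCLike 𝕜]

open scoped MatrixOrder in
theorem PosSemidef.trace_mul_nonneg {A B : Matrix n n 𝕜} (hA : A.PosSemidef)
    (hB : B.PosSemidef) : 0 ≤ (A * B).trace := by
  obtain ⟨C, rfl⟩ := CStarAlgebra.nonneg_iff_eq_star_mul_self.mp hB.nonneg
  rw [← mul_assoc, trace_mul_comm]
  simpa [mul_assoc, star_eq_conjTranspose] using (hA.mul_mul_conjTranspose_same C).trace_nonneg

theorem PosDef.log_det_le_trace_sub_card {K : Matrix n n 𝕜} (hK : K.PosDef) :
    Real.log (RCLike.re K.det) ≤ RCLike.re K.trace - Fintype.card n := by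
  have hdet : RCLike.re K.det = ∏ i, hK.isHermitian.eigenvalues i := by
    rw [hK.isHermitian.det_eq_prod_eigenvalues, ← RCLike.ofReal_prod, RCLike.ofReal_re]
  have htr : RCLike.re K.trace = ∑ i, hK.isHermitian.eigenvalues i := by
    rw [hK.isHermitian.trace_eq_sum_eigenvalues, ← RCLike.ofReal_sum, RCLike.ofReal_re]
  rw [hdet, htr, Real.log_prod fun i _ => (hK.eigenvalues_pos i).ne', Fintype.card_eq_sum_ones,
    Nat.cast_sum, Nat.cast_one, ← Finset.sum_sub_distrib]
  exact Finset.sum_le_sum fun i _ => Real.log_le_sub_one_of_pos (hK.eigenvalues_pos i)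


noncomputable def logDetAddTraceInv (M : Matrix n n 𝕜) : ℝ :=
  Real.log (RCLike.re M.det) + RCLike.re M⁻¹.trace

theorem PosDef.card_le_logDetAddTraceInv {M : Matrix n n 𝕜} (hM : M.PosDef) :
    (Fintype.card n : ℝ) ≤ logDetAddTraceInv M := by
  have h := hM.inv.log_det_le_trace_sub_card
  obtain ⟨d, -, hd⟩ := RCLike.pos_iff_exists_ofReal.mp hM.det_pos
  rw [det_nonsing_inv, ← hd, Ring.inverse_eq_inv', ← RCLike.ofReal_inv, RCLike.ofReal_re,
    Real.log_inv] at h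
  rw [logDetAddTraceInv, ← hd, RCLike.ofReal_re]
  linarith

theorem PosDef.one_add_mul_inv_mul_conjTranspose {M : Matrix n n 𝕜} (hM : M.PosDef)
    (R : Matrix m n 𝕜) : (1 + R * M⁻¹ * Rᴴ).PosDef :=
  PosDef.one.add_posSemidef (hM.inv.posSemidef.mul_mul_conjTranspose_same R)

theorem PosDef.trace_inv_add_conjTranspose_mul {M : Matrix n n 𝕜} (hM : M.PosDef)
    (R : Matrix m n 𝕜) :
    (M + Rᴴ * R)⁻¹.trace
      = M⁻¹.trace - ((1 + R * M⁻¹ * Rᴴ)⁻¹ * (R * M⁻¹ * M⁻¹ * Rᴴ)).trace := by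
  have hY := hM.one_add_mul_inv_mul_conjTranspose R
  have h := add_mul_mul_inv_eq_sub M Rᴴ 1 R hM.isUnit isUnit_one (by simpa using hY.isUnit)
  rw [Matrix.mul_one, inv_one] at h
  rw [h, trace_sub]
  congr 1
  rw [Matrix.mul_assoc, trace_mul_comm, ← Matrix.mul_assoc (R * M⁻¹), trace_mul_comm]
  simp only [Matrix.mul_assoc]

theorem PosDef.logDetAddTraceInv_add_conjTranspose_mul {M : Matrix n n 𝕜} (hM : M.PosDef)
    (R : Matrix m n 𝕜) :
    logDetAddTraceInv (M + Rᴴ * R) = logDetAddTraceInv M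
      + (logDetAddTraceInv (1 + R * M⁻¹ * Rᴴ) - Fintype.card m)
      + RCLike.re ((1 + R * M⁻¹ * Rᴴ)⁻¹ * (R * (M⁻¹ - M⁻¹ * M⁻¹) * Rᴴ)).trace := by
  set Y := R * M⁻¹ * Rᴴ
  have hY : (1 + Y).PosDef := hM.one_add_mul_inv_mul_conjTranspose R
  have hdet : (M + Rᴴ * R).det = M.det * (1 + Y).det :=
    det_add_mul Rᴴ R hM.det_pos.ne'.isUnit
  obtain ⟨d, hd, hdM⟩ := RCLike.pos_iff_exists_ofReal.mp hM.det_pos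
  obtain ⟨e, he, heY⟩ := RCLike.pos_iff_exists_ofReal.mp hY.det_pos
  have htr : ((1 + Y)⁻¹ * (R * (M⁻¹ - M⁻¹ * M⁻¹) * Rᴴ)).trace
      = Fintype.card m - (1 + Y)⁻¹.trace - ((1 + Y)⁻¹ * (R * M⁻¹ * M⁻¹ * Rᴴ)).trace := by
    have hsplit : R * (M⁻¹ - M⁻¹ * M⁻¹) * Rᴴ = Y - R * M⁻¹ * M⁻¹ * Rᴴ := by
      rw [Matrix.mul_sub, Matrix.sub_mul, ← Matrix.mul_assoc R M⁻¹ M⁻¹]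
    rw [hsplit, Matrix.mul_sub, trace_sub, inv_one_add_mul_self hY.det_pos.ne'.isUnit, trace_sub,
      trace_one]
  simp only [logDetAddTraceInv, hdet, hM.trace_inv_add_conjTranspose_mul R, htr, ← hdM, ← heY,
    ← RCLike.ofReal_mul, RCLike.ofReal_re, Real.log_mul hd.ne' he.ne', map_sub,
    RCLike.natCast_re]
  ring

open scoped MatrixOrder in
theorem logDetAddTraceInv_mono {M M' : Matrix n n 𝕜} (hM : (M - 1).PosSemidef)
    (hMM' : (M' - M).PosSemidef) : logDetAddTraceInv M ≤ logDetAddTraceInv M' := by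
  have hMpd : M.PosDef := by simpa using PosDef.one.add_posSemidef hM
  obtain ⟨R, hR⟩ := CStarAlgebra.nonneg_iff_eq_star_mul_self.mp hMM'.nonneg
  obtain rfl : M' = M + Rᴴ * R := by rw [← star_eq_conjTranspose, ← hR]; abel
  have hY := hMpd.one_add_mul_inv_mul_conjTranspose R
  have hinvgap : (M⁻¹ - M⁻¹ * M⁻¹).PosSemidef := by
    have h : M⁻¹ - M⁻¹ * M⁻¹ = M⁻¹ * (M - 1) * M⁻¹ᴴ := by
      rw [hMpd.inv.isHermitian.eq, mul_sub, sub_mul, mul_one,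
        nonsing_inv_mul _ hMpd.det_pos.ne'.isUnit, one_mul]
    rw [h]
    exact hM.mul_mul_conjTranspose_same _
  have hgap := hY.card_le_logDetAddTraceInv
  have htr := (RCLike.nonneg_iff.mp
    (hY.inv.posSemidef.trace_mul_nonneg (hinvgap.mul_mul_conjTranspose_same R))).1
  rw [hMpd.logDetAddTraceInv_add_conjTranspose_mul R]
  linarith

end Matrix

theorem Dfun_conjTranspose_mul {Na : ℕ} (σw : ℝ) (W R : Matrix (Fin Na) (Fin Na) ℂ) :
    Dfun σw W (Rᴴ * R) = logDetAddTraceInv (1 + (σw ^ 2)⁻¹ • (R * W * Rᴴ)) - Na := by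
  have hshift : (σw ^ 2)⁻¹ • (W * (Rᴴ * R)) = ((σw ^ 2)⁻¹ • (W * Rᴴ)) * R := by
    rw [Matrix.smul_mul, Matrix.mul_assoc]
  have hswap : R * ((σw ^ 2)⁻¹ • (W * Rᴴ)) = (σw ^ 2)⁻¹ • (R * W * Rᴴ) := by
    rw [Matrix.mul_smul, Matrix.mul_assoc]
  rw [Dfun, logDetAddTraceInv, hshift, det_one_add_mul_comm, trace_inv_one_add_mul_comm, hswap]
  rfl

open scoped MatrixOrder in
theorem Dfun_mono_left {Na : ℕ} (σw : ℝ) {W W' Q : Matrix (Fin Na) (Fin Na) ℂ}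
    (hQ : Q.PosSemidef) (hW : W.PosSemidef) (hWW' : (W' - W).PosSemidef) :
    Dfun σw W Q ≤ Dfun σw W' Q := by
  obtain ⟨R, rfl⟩ := CStarAlgebra.nonneg_iff_eq_star_mul_self.mp hQ.nonneg
  rw [star_eq_conjTranspose, Dfun_conjTranspose_mul, Dfun_conjTranspose_mul]
  have hσ : (0 : ℝ) ≤ (σw ^ 2)⁻¹ := by positivity
  refine sub_le_sub_right (logDetAddTraceInv_mono ?_ ?_) _
  · simpa using (hW.mul_mul_conjTranspose_same R).smul hσ
  · rw [add_sub_add_left_eq_sub, ← smul_sub, ← Matrix.sub_mul, ← Matrix.mul_sub]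
    exact (hWW'.mul_mul_conjTranspose_same R).smul hσ

theorem forall_Dfun_le_iff_Dfun_smul_one_le {Na : ℕ} {σw γw c : ℝ} (hγw : 0 ≤ γw)
    {Q : Matrix (Fin Na) (Fin Na) ℂ} (hQ : Q.PosSemidef) :
    (∀ W : Matrix (Fin Na) (Fin Na) ℂ, W.PosSemidef →
        ((γw : ℂ) • (1 : Matrix (Fin Na) (Fin Na) ℂ) - W).PosSemidef → Dfun σw W Q ≤ c) ↔
      Dfun σw ((γw : ℂ) • (1 : Matrix (Fin Na) (Fin Na) ℂ)) Q ≤ c := by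
  have hγ : ((γw : ℂ) • (1 : Matrix (Fin Na) (Fin Na) ℂ)).PosSemidef :=
    PosSemidef.one.smul (by exact_mod_cast hγw)
  refine ⟨fun h => h _ hγ (by simpa using PosSemidef.zero), fun h W hW hWγ => ?_⟩
  exact (Dfun_mono_left σw hQ hW hWγ).trans h

theorem saddle_point_robust_feasibility_general (Na : ℕ) (σw γw : ℝ)
    (hγw : 0 < γw) (c : ℝ)
    (Q : Matrix (Fin Na) (Fin Na) ℂ) (hQ : Q.PosSemidef) :
    ((∀ W : Matrix (Fin Na) (Fin Na) ℂ, W.PosSemidef →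
        ((γw : ℂ) • (1 : Matrix (Fin Na) (Fin Na) ℂ) - W).PosSemidef →
        Dfun σw W Q ≤ c) ↔
      Dfun σw ((γw : ℂ) • (1 : Matrix (Fin Na) (Fin Na) ℂ)) Q ≤ c) ∧
    (∀ Rfun : Matrix (Fin Na) (Fin Na) ℂ → ℝ,
      sSup {r : ℝ | ∃ Q' : Matrix (Fin Na) (Fin Na) ℂ, Q'.PosSemidef ∧
          (∀ W : Matrix (Fin Na) (Fin Na) ℂ, W.PosSemidef →
            ((γw : ℂ) • (1 : Matrix (Fin Na) (Fin Na) ℂ) - W).PosSemidef →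
            Dfun σw W Q' ≤ c) ∧
          r = Rfun Q'} =
      sSup {r : ℝ | ∃ Q' : Matrix (Fin Na) (Fin Na) ℂ, Q'.PosSemidef ∧
          Dfun σw ((γw : ℂ) • (1 : Matrix (Fin Na) (Fin Na) ℂ)) Q' ≤ c ∧
          r = Rfun Q'}) := by
  refine ⟨forall_Dfun_le_iff_Dfun_smul_one_le hγw.le hQ, fun Rfun => ?_⟩
  congr 1
  ext r
  exact exists_congr fun Q' => and_congr_right fun hQ' =>
    and_congr_left' (forall_Dfun_le_iff_Dfun_smul_one_le hγw.le hQ')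

/-- **Saddle-point / robust feasibility (Propositions 2 and 3 combined).**
Feasibility of `Q` against every Willie Gram matrix of spectral norm at most `γ_w` is
equivalent to feasibility against the isotropic matrix `γ_w·1`; consequently, the supremum
of any rate functional over the robustly feasible covariances equals its supremum over the
covariances feasible for `W = γ_w·1`. -/
theorem saddle_point_robust_feasibility (Na : ℕ) (hNa : 1 ≤ Na) (σw γw : ℝ)
    (hσw : 0 < σw) (hγw : 0 < γw) (c : ℝ) (hc : 0 ≤ c)
    (Q : Matrix (Fin Na) (Fin Na) ℂ) (hQ : Q.PosSemidef) :
    ((∀ W : Matrix (Fin Na) (Fin Na) ℂ, W.PosSemidef →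
        ((γw : ℂ) • (1 : Matrix (Fin Na) (Fin Na) ℂ) - W).PosSemidef →
        Dfun σw W Q ≤ c) ↔
      Dfun σw ((γw : ℂ) • (1 : Matrix (Fin Na) (Fin Na) ℂ)) Q ≤ c) ∧
    (∀ Rfun : Matrix (Fin Na) (Fin Na) ℂ → ℝ,
      sSup {r : ℝ | ∃ Q' : Matrix (Fin Na) (Fin Na) ℂ, Q'.PosSemidef ∧
          (∀ W : Matrix (Fin Na) (Fin Na) ℂ, W.PosSemidef →
            ((γw : ℂ) • (1 : Matrix (Fin Na) (Fin Na) ℂ) - W).PosSemidef →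
            Dfun σw W Q' ≤ c) ∧
          r = Rfun Q'} =
      sSup {r : ℝ | ∃ Q' : Matrix (Fin Na) (Fin Na) ℂ, Q'.PosSemidef ∧
          Dfun σw ((γw : ℂ) • (1 : Matrix (Fin Na) (Fin Na) ℂ)) Q' ≤ c ∧
          r = Rfun Q'}) :=
  saddle_point_robust_feasibility_general Na σw γw hγw c Q hQ
end

section
/- Square-root law achievability over the MIMO AWGN channel (Theorem 2, lower bound): Let N_a ≥ 1 and n ≥ 1 be integers, σ_b, σ_w, γ_w, δ, P > 0 real numbers, and let W_b be an N_a×N_a complex Hermitian positive semidefinite matrix of rank N whose nonzero eigenvalues are λ_1, …, λ_N > 0. Assume √2·N·σ_w²·δ/(γ_w·√(n·N_a)) ≤ P. Define C_pd(δ) := sSup { R(Q) : Q an N_a×N_a complex Hermitian positive semidefinite matrix with (Q.trace).re ≤ P and n·D(γ_w·1, Q) ≤ 2δ² }. Then C_pd(δ) ≥ Σ_{i=1}^{N} Real.log(1 + √2·σ_w²·δ·λ_i/(σ_b²·γ_w·√(n·N_a))). -/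
open Matrix
open scoped ComplexOrder

/-- The rate functional for Bob's channel: `R(Q) = log (det (1 + σ_b⁻² W_b Q)).re`. -/
noncomputable def Rfun {Na : ℕ} (σb : ℝ) (Wb Q : Matrix (Fin Na) (Fin Na) ℂ) : ℝ :=
  Real.log ((1 + (σb ^ 2)⁻¹ • (Wb * Q)).det.re)

/-!
Diagonalise `W_b = U diag(λ) Uᴴ` and let Alice send isotropically, with power `c` per mode, on the
range of `W_b`: `Q = c · U diag(1_{λ ≠ 0}) Uᴴ`. Both `W_b Q` and `γ_w Q` are then diagonal in the
basis `U`, so the rate is `Σ log(1 + λ_i c / σ_b²)` and the detection functional is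
`N · g(γ_w c / σ_w²)` (`N = rank W_b`) with `g(x) = log(1 + x) + 1/(1 + x) − 1 ≤ x²`. The choice
`c = √2 σ_w² δ / (γ_w √(n N_a))` makes `n N g(x) ≤ 2δ² N / N_a ≤ 2δ²` and `tr Q = N c ≤ P`, so `Q` is
feasible. The feasible rates are bounded above because the entries of a positive semidefinite `Q`
are bounded by its trace, so `C_pd(δ)` is a genuine supremum.
-/

open Unitary

namespace Matrix

section conjStarAlgAut

variable {n R : Type*} [Fintype n] [DecidableEq n] [CommRing R] [StarRing R]

theorem det_conjStarAlgAut (u : unitary (Matrix n n R)) (X : Matrix n n R) :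
    (conjStarAlgAut R _ u X).det = X.det := by
  rw [conjStarAlgAut_apply, det_mul, det_mul, mul_right_comm, ← det_mul, mul_comm,
    mul_star_self_of_mem u.2, det_one, mul_one]

theorem trace_conjStarAlgAut (u : unitary (Matrix n n R)) (X : Matrix n n R) :
    (conjStarAlgAut R _ u X).trace = X.trace := by
  rw [conjStarAlgAut_apply, trace_mul_cycle, star_mul_self_of_mem u.2, one_mul]

theorem conjStarAlgAut_inv (u : unitary (Matrix n n R)) (X : Matrix n n R) :
    (conjStarAlgAut R _ u X)⁻¹ = conjStarAlgAut R _ u X⁻¹ := by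
  rw [conjStarAlgAut_apply, conjStarAlgAut_apply, mul_inv_rev, mul_inv_rev,
    inv_eq_left_inv (mul_star_self_of_mem u.2), inv_eq_left_inv (star_mul_self_of_mem u.2),
    mul_assoc]

end conjStarAlgAut

theorem PosSemidef.norm_apply_le_trace_re {n : Type*} [Fintype n] {Q : Matrix n n ℂ}
    (hQ : Q.PosSemidef) (i j : n) : ‖Q i j‖ ≤ Q.trace.re := by
  classical
  have hdiag_nonneg : ∀ k, 0 ≤ (Q k k).re := fun k => (Complex.nonneg_iff.mp hQ.diag_nonneg).1
  have hdiag_le : ∀ k, (Q k k).re ≤ Q.trace.re := fun k => by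
    rw [trace, Complex.re_sum]
    exact Finset.single_le_sum (f := fun l => (Q l l).re) (fun l _ => hdiag_nonneg l)
      (Finset.mem_univ k)
  have hminor := (hQ.submatrix ![i, j]).det_nonneg
  simp only [det_fin_two, submatrix_apply, cons_val_zero, cons_val_one] at hminor
  rw [← hQ.1.apply i j, Complex.star_def, Complex.conj_mul', ← hQ.1.coe_re_apply_self i,
    ← hQ.1.coe_re_apply_self j] at hminor
  have hcs : ‖Q j i‖ ^ 2 ≤ (Q i i).re * (Q j j).re := by
    rw [← sub_nonneg, ← Complex.zero_le_real]
    simpa using hminor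
  rw [← hQ.1.apply i j, norm_star]
  nlinarith [hdiag_le i, hdiag_le j, hdiag_nonneg i, hdiag_nonneg j, norm_nonneg (Q j i)]

namespace IsHermitian

variable {n : Type*} [Fintype n] [DecidableEq n] {W : Matrix n n ℂ} (hW : W.IsHermitian)

noncomputable def rangeProj : Matrix n n ℂ :=
  conjStarAlgAut ℂ _ hW.eigenvectorUnitary
    (diagonal fun j => ((if hW.eigenvalues j = 0 then 0 else 1 : ℝ) : ℂ))

theorem smul_rangeProj (c : ℝ) :
    (c : ℂ) • hW.rangeProj = conjStarAlgAut ℂ _ hW.eigenvectorUnitary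
      (diagonal fun j => ((if hW.eigenvalues j = 0 then 0 else c : ℝ) : ℂ)) := by
  rw [rangeProj, ← map_smul, ← diagonal_smul]
  congr 2; ext j
  split_ifs <;> simp [*]

theorem posSemidef_smul_rangeProj {c : ℝ} (hc : 0 ≤ c) : ((c : ℂ) • hW.rangeProj).PosSemidef := by
  rw [smul_rangeProj, conjStarAlgAut_apply, star_eq_conjTranspose]
  refine PosSemidef.mul_mul_conjTranspose_same (PosSemidef.diagonal fun j => ?_) _
  split_ifs <;> simp [hc]

theorem trace_smul_rangeProj (c : ℝ) : ((c : ℂ) • hW.rangeProj).trace = c * W.rank := by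
  rw [trace_smul, rangeProj, trace_conjStarAlgAut, trace_diagonal, hW.rank_eq_card_non_zero_eigs]
  simp [Fintype.card_subtype, apply_ite, Finset.sum_ite]

end IsHermitian

end Matrix

theorem Finset.sum_comp_eq_of_map_add_replicate_zero {ι κ α M : Type*} [Fintype ι] [Fintype κ]
    [Zero α] [AddCommMonoid M] {a : ι → α} {e : κ → α} {k : ℕ}
    (h : Multiset.map a univ.val + Multiset.replicate k 0 = Multiset.map e univ.val)
    {f : α → M} (hf : f 0 = 0) : ∑ j, f (e j) = ∑ i, f (a i) := by
  have := congrArg (fun s => (s.map f).sum) h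
  simpa [Multiset.map_replicate, hf, Multiset.map_map] using this.symm

/-- The relative entropy `D(𝒞𝒩(0,1) ‖ 𝒞𝒩(0,1+x))`; `Dfun` is its sum over the eigenmodes. -/
noncomputable def gaussKL (x : ℝ) : ℝ := Real.log (1 + x) + (1 + x)⁻¹ - 1

theorem gaussKL_le_sq {x : ℝ} (hx : 0 ≤ x) : gaussKL x ≤ x ^ 2 := by
  have hx1 : 0 < 1 + x := by linarith
  have hlog : Real.log (1 + x) ≤ x := by linarith [Real.log_le_sub_one_of_pos hx1]
  have hinv : (1 + x)⁻¹ ≤ x ^ 2 - x + 1 := by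
    rw [inv_eq_one_div, div_le_iff₀ hx1]
    nlinarith [pow_nonneg hx 3]
  unfold gaussKL
  linarith

theorem mul_mul_gaussKL_sqrt_le {n N Na : ℕ} (hN : N ≤ Na) {δ : ℝ} (hδ : 0 ≤ δ) :
    (n : ℝ) * (N * gaussKL (Real.sqrt 2 * δ / Real.sqrt (n * Na))) ≤ 2 * δ ^ 2 := by
  have hx_sq : (Real.sqrt 2 * δ / Real.sqrt (n * Na)) ^ 2 = 2 * δ ^ 2 / (n * Na) := by
    rw [div_pow, mul_pow, Real.sq_sqrt zero_le_two, Real.sq_sqrt (by positivity)]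
  calc (n : ℝ) * (N * gaussKL (Real.sqrt 2 * δ / Real.sqrt (n * Na)))
      ≤ n * (N * (2 * δ ^ 2 / (n * Na))) := by
        rw [← hx_sq]; gcongr; exact gaussKL_le_sq (by positivity)
    _ = 2 * δ ^ 2 * ((n * N) / (n * Na)) := by ring
    _ ≤ 2 * δ ^ 2 := mul_le_of_le_one_right (by positivity)
        (div_le_one_of_le₀ (by gcongr) (by positivity))

section unitaryInvariance

variable {m : ℕ}

theorem one_add_smul_conjStarAlgAut_mul (u : unitary (Matrix (Fin m) (Fin m) ℂ)) (t : ℝ)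
    (A B : Matrix (Fin m) (Fin m) ℂ) :
    1 + t • (conjStarAlgAut ℂ _ u A * conjStarAlgAut ℂ _ u B)
      = conjStarAlgAut ℂ _ u (1 + t • (A * B)) := by
  rw [map_add, map_one, ← Complex.coe_smul t (A * B), map_smul, map_mul, Complex.coe_smul]

theorem Rfun_conjStarAlgAut (σ : ℝ) (u : unitary (Matrix (Fin m) (Fin m) ℂ))
    (A B : Matrix (Fin m) (Fin m) ℂ) :
    Rfun σ (conjStarAlgAut ℂ _ u A) (conjStarAlgAut ℂ _ u B) = Rfun σ A B := by
  rw [Rfun, Rfun, one_add_smul_conjStarAlgAut_mul, det_conjStarAlgAut]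

theorem Dfun_conjStarAlgAut (σ : ℝ) (u : unitary (Matrix (Fin m) (Fin m) ℂ))
    (A B : Matrix (Fin m) (Fin m) ℂ) :
    Dfun σ (conjStarAlgAut ℂ _ u A) (conjStarAlgAut ℂ _ u B) = Dfun σ A B := by
  rw [Dfun, Dfun, one_add_smul_conjStarAlgAut_mul, det_conjStarAlgAut, conjStarAlgAut_inv,
    trace_conjStarAlgAut]

end unitaryInvariance

section diagonal

variable {m : ℕ}

theorem one_add_smul_diagonal_mul_diagonal (t : ℝ) (a b : Fin m → ℝ) :
    (1 + t • (diagonal (fun j => (a j : ℂ)) * diagonal (fun j => (b j : ℂ))) :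
      Matrix (Fin m) (Fin m) ℂ) = diagonal (fun j => ((1 + t * (a j * b j) : ℝ) : ℂ)) := by
  ext i j
  rcases eq_or_ne i j with rfl | h <;> simp [one_apply, *]

theorem Rfun_diagonal (σ : ℝ) {a b : Fin m → ℝ} (ha : 0 ≤ a) (hb : 0 ≤ b) :
    Rfun σ (diagonal fun j => (a j : ℂ)) (diagonal fun j => (b j : ℂ))
      = ∑ j, Real.log (1 + (σ ^ 2)⁻¹ * (a j * b j)) := by
  rw [Rfun, one_add_smul_diagonal_mul_diagonal, det_diagonal, ← Complex.ofReal_prod,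
    Complex.ofReal_re, Real.log_prod]
  intro j _
  have := mul_nonneg (ha j) (hb j)
  positivity

theorem Dfun_diagonal (σ : ℝ) {a b : Fin m → ℝ} (ha : 0 ≤ a) (hb : 0 ≤ b) :
    Dfun σ (diagonal fun j => (a j : ℂ)) (diagonal fun j => (b j : ℂ))
      = ∑ j, gaussKL ((σ ^ 2)⁻¹ * (a j * b j)) := by
  set v : Fin m → ℝ := fun j => 1 + (σ ^ 2)⁻¹ * (a j * b j)
  have hv : ∀ j, 0 < v j := fun j => by
    have := mul_nonneg (ha j) (hb j)
    positivity
  have hinv : (diagonal fun j => (v j : ℂ))⁻¹ = diagonal fun j => (((v j)⁻¹ : ℝ) : ℂ) :=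
    inv_eq_left_inv <| by
      rw [diagonal_mul_diagonal, ← diagonal_one]
      congr 1; ext j
      simp only [Complex.ofReal_inv]
      exact inv_mul_cancel₀ (Complex.ofReal_ne_zero.mpr (hv j).ne')
  rw [Dfun, one_add_smul_diagonal_mul_diagonal, hinv, det_diagonal, trace_diagonal,
    ← Complex.ofReal_prod, ← Complex.ofReal_sum, Complex.ofReal_re, Complex.ofReal_re,
    Real.log_prod fun j _ => (hv j).ne']
  simp [gaussKL, v, Finset.sum_sub_distrib, Finset.sum_add_distrib]

end diagonal

section rangeProj

variable {m : ℕ} {W : Matrix (Fin m) (Fin m) ℂ}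

theorem Rfun_smul_rangeProj (σ : ℝ) (hW : W.PosSemidef) {c : ℝ} (hc : 0 ≤ c) :
    Rfun σ W ((c : ℂ) • hW.1.rangeProj)
      = ∑ j, Real.log (1 + (σ ^ 2)⁻¹ * (hW.1.eigenvalues j * c)) := by
  have hWdiag := hW.1.spectral_theorem
  rw [RCLike.ofReal_eq_complex_ofReal, Function.comp_def] at hWdiag
  nth_rw 1 [hWdiag]
  rw [hW.1.smul_rangeProj, Rfun_conjStarAlgAut, Rfun_diagonal σ hW.eigenvalues_nonneg]
  · refine Finset.sum_congr rfl fun j _ => ?_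
    split_ifs with h <;> simp [h]
  · intro j
    simp only [Pi.zero_apply]
    split_ifs <;> simp [hc]

theorem Dfun_smul_one_smul_rangeProj (σ : ℝ) (hW : W.IsHermitian) {γ c : ℝ} (hγ : 0 ≤ γ)
    (hc : 0 ≤ c) :
    Dfun σ ((γ : ℂ) • 1) ((c : ℂ) • hW.rangeProj) = W.rank * gaussKL ((σ ^ 2)⁻¹ * (γ * c)) := by
  have hscalar : ((γ : ℂ) • 1 : Matrix (Fin m) (Fin m) ℂ)
      = conjStarAlgAut ℂ _ hW.eigenvectorUnitary (diagonal fun _ => (γ : ℂ)) := by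
    rw [← smul_one_eq_diagonal, map_smul, map_one]
  rw [hscalar, hW.smul_rangeProj, Dfun_conjStarAlgAut, Dfun_diagonal σ (fun _ => hγ)]
  · have hterm : ∀ j, gaussKL ((σ ^ 2)⁻¹ * (γ * if hW.eigenvalues j = 0 then 0 else c))
        = if hW.eigenvalues j = 0 then 0 else gaussKL ((σ ^ 2)⁻¹ * (γ * c)) := fun j => by
      split_ifs <;> simp [gaussKL]
    rw [hW.rank_eq_card_non_zero_eigs, Fintype.card_subtype]
    simp only [hterm, Finset.sum_ite, Finset.sum_const_zero, zero_add, Finset.sum_const,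
      nsmul_eq_mul]
  · intro j
    simp only [Pi.zero_apply]
    split_ifs <;> simp [hc]

end rangeProj

theorem bddAbove_Rfun_image {m : ℕ} (σ : ℝ) (W : Matrix (Fin m) (Fin m) ℂ) (P : ℝ) :
    BddAbove (Rfun σ W '' {Q | Q.PosSemidef ∧ Q.trace.re ≤ P}) := by
  obtain ⟨a, ha⟩ := Finite.exists_le fun p : Fin m × Fin m => ‖W p.1 p.2‖
  refine ⟨(m.factorial : ℝ) * (1 + (σ ^ 2)⁻¹ * (m * (a * P))) ^ m, ?_⟩
  rintro _ ⟨Q, ⟨hQ, htr⟩, rfl⟩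
  have hentry : ∀ i j, ‖(1 + (σ ^ 2)⁻¹ • (W * Q)) i j‖ ≤ 1 + (σ ^ 2)⁻¹ * (m * (a * P)) := by
    intro i j
    have hWQ : ‖(W * Q) i j‖ ≤ m * (a * P) := by
      rw [mul_apply]
      calc _ ≤ ∑ k, ‖W i k * Q k j‖ := norm_sum_le _ _
        _ ≤ ∑ k : Fin m, a * P := Finset.sum_le_sum fun k _ =>
            norm_mul_le_of_le (ha (i, k)) ((hQ.norm_apply_le_trace_re k j).trans htr)
        _ = _ := by simp
    calc _ ≤ ‖(1 : Matrix (Fin m) (Fin m) ℂ) i j‖ + ‖((σ ^ 2)⁻¹ • (W * Q)) i j‖ :=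
          norm_add_le _ _
      _ ≤ 1 + (σ ^ 2)⁻¹ * (m * (a * P)) := by
        gcongr
        · rw [one_apply]; split_ifs <;> simp
        · rw [Matrix.smul_apply, norm_smul, Real.norm_of_nonneg (by positivity)]; gcongr
  have hdet := det_le (abv := NormedField.toAbsoluteValue ℂ) hentry
  simp only [Fintype.card_fin, nsmul_eq_mul] at hdet
  calc Rfun σ W Q ≤ |(1 + (σ ^ 2)⁻¹ • (W * Q)).det.re| := by
        rw [Rfun, ← Real.log_abs]; exact Real.log_le_self (abs_nonneg _)
    _ ≤ ‖(1 + (σ ^ 2)⁻¹ • (W * Q)).det‖ := Complex.abs_re_le_norm _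
    _ ≤ _ := hdet

theorem srl_mimo_achievability_general (Na n N : ℕ)
    (σb σw γw δ P : ℝ) (hσw : 0 < σw) (hγw : 0 < γw)
    (hδ : 0 < δ)
    (Wb : Matrix (Fin Na) (Fin Na) ℂ) (hWb : Wb.PosSemidef) (hrank : Wb.rank = N)
    (lam : Fin N → ℝ)
    (heig : Multiset.map lam Finset.univ.val + Multiset.replicate (Na - N) 0
      = Multiset.map hWb.1.eigenvalues Finset.univ.val)
    (hPth : Real.sqrt 2 * N * σw ^ 2 * δ / (γw * Real.sqrt ((n : ℝ) * Na)) ≤ P) :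
    ∑ i : Fin N,
        Real.log (1 + Real.sqrt 2 * σw ^ 2 * δ * lam i /
          (σb ^ 2 * γw * Real.sqrt ((n : ℝ) * Na)))
      ≤ sSup {r : ℝ | ∃ Q : Matrix (Fin Na) (Fin Na) ℂ, Q.PosSemidef ∧
          (Q.trace).re ≤ P ∧
          (n : ℝ) * Dfun σw ((γw : ℂ) • (1 : Matrix (Fin Na) (Fin Na) ℂ)) Q ≤ 2 * δ ^ 2 ∧
          r = Rfun σb Wb Q} := by
  set c := Real.sqrt 2 * σw ^ 2 * δ / (γw * Real.sqrt ((n : ℝ) * Na)) with hc_def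
  have hc : 0 ≤ c := by positivity
  have hx : (σw ^ 2)⁻¹ * (γw * c) = Real.sqrt 2 * δ / Real.sqrt ((n : ℝ) * Na) := by
    rw [hc_def]; field_simp
  refine le_csSup ((bddAbove_Rfun_image σb Wb P).mono ?_)
    ⟨(c : ℂ) • hWb.1.rangeProj, hWb.1.posSemidef_smul_rangeProj hc, ?_, ?_, ?_⟩
  · rintro _ ⟨Q, hQ, htr, -, rfl⟩
    exact ⟨Q, ⟨hQ, htr⟩, rfl⟩
  · rw [hWb.1.trace_smul_rangeProj, hrank, hc_def]
    convert hPth using 1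
    norm_cast; ring
  · rw [Dfun_smul_one_smul_rangeProj σw hWb.1 hγw.le hc, hrank, hx]
    exact mul_mul_gaussKL_sqrt_le (hrank ▸ rank_le_width Wb) hδ.le
  · rw [Rfun_smul_rangeProj σb hWb hc, Finset.sum_comp_eq_of_map_add_replicate_zero heig
      (f := fun t => Real.log (1 + (σb ^ 2)⁻¹ * (t * c))) (by simp)]
    refine Finset.sum_congr rfl fun i _ => ?_
    rw [hc_def]; congr 1; ring

/-- **Square-root law achievability over the MIMO AWGN channel (Theorem 2, lower bound).**
If `W_b` is Hermitian PSD of rank `N` with positive eigenvalues `λ_1, …, λ_N` (the remaining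
`N_a − N` eigenvalues being zero) and `√2·N·σ_w²·δ/(γ_w·√(n·N_a)) ≤ P`, then the `δ`-PD
constrained capacity `C_pd(δ)` (for the worst-case isotropic Willie Gram matrix `γ_w·1`)
is at least `Σ_i log(1 + √2·σ_w²·δ·λ_i/(σ_b²·γ_w·√(n·N_a)))`. -/
theorem srl_mimo_achievability (Na n N : ℕ) (hNa : 1 ≤ Na) (hn : 1 ≤ n)
    (σb σw γw δ P : ℝ) (hσb : 0 < σb) (hσw : 0 < σw) (hγw : 0 < γw)
    (hδ : 0 < δ) (hP : 0 < P)
    (Wb : Matrix (Fin Na) (Fin Na) ℂ) (hWb : Wb.PosSemidef) (hrank : Wb.rank = N)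
    (lam : Fin N → ℝ) (hlam : ∀ i, 0 < lam i)
    (heig : Multiset.map lam Finset.univ.val + Multiset.replicate (Na - N) 0
      = Multiset.map hWb.1.eigenvalues Finset.univ.val)
    (hPth : Real.sqrt 2 * N * σw ^ 2 * δ / (γw * Real.sqrt ((n : ℝ) * Na)) ≤ P) :
    ∑ i : Fin N,
        Real.log (1 + Real.sqrt 2 * σw ^ 2 * δ * lam i /
          (σb ^ 2 * γw * Real.sqrt ((n : ℝ) * Na)))
      ≤ sSup {r : ℝ | ∃ Q : Matrix (Fin Na) (Fin Na) ℂ, Q.PosSemidef ∧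
          (Q.trace).re ≤ P ∧
          (n : ℝ) * Dfun σw ((γw : ℂ) • (1 : Matrix (Fin Na) (Fin Na) ℂ)) Q ≤ 2 * δ ^ 2 ∧
          r = Rfun σb Wb Q} :=
  srl_mimo_achievability_general Na n N σb σw γw δ P hσw hγw hδ Wb hWb hrank lam heig hPth
end

section
/- Unit-rank channels, achievability (Theorem 3, lower bound): Let N_a ≥ 1 and n ≥ 1 be integers, σ_b, σ_w, λ_b, λ_w, δ, P > 0 real numbers, and let u_b, u_w ∈ ℂ^{N_a} be unit vectors with c := |⟨u_w, u_b⟩|² > 0. Let W_b := λ_b • (outer product of u_b with itself) and W_w := λ_w • (outer product of u_w with itself). Define C_pd(δ) := sSup { R(Q) : Q an N_a×N_a complex Hermitian positive semidefinite matrix with (Q.trace).re ≤ P and n·D(W_w, Q) ≤ 2δ² }. Then C_pd(δ) ≥ min { Real.log(1 + √2·σ_w²·δ·λ_b/(σ_b²·λ_w·c·√n)), Real.log(1 + λ_b·P/σ_b²) }. -/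
open Matrix
open scoped ComplexOrder InnerProductSpace

/-- The outer product `u uᴴ` of a vector with itself, with `(i,j)` entry `u i * conj (u j)`. -/
noncomputable def outer {Na : ℕ} (u : EuclideanSpace ℂ (Fin Na)) :
    Matrix (Fin Na) (Fin Na) ℂ :=
  Matrix.of fun i j => u i * star (u j)

/-!
Beamform towards Bob with power `p = min P p₀`, i.e. take `Q = p • u_b u_bᴴ`. For rank-one
matrices the determinant and the inverse of `1 + u vᴴ` are explicit (matrix determinant lemma,
Sherman–Morrison), so Bob's rate is `log (1 + λ_b p / σ_b²)` and Willie sees the scalar SNR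
`y = λ_w c p / σ_w²`, with `D = log (1 + y) - y / (1 + y) ≤ y²`. The power `p₀` is the one at
which `y √n = √2 δ`, so `Q` meets the detection constraint `n D ≤ 2 δ²`. Any feasible `Q` bounds
the supremum from below, and the supremum exists because `uᴴ Q u ≤ tr Q` caps every rate at the
unconstrained capacity.
-/

namespace Matrix

variable {m : Type*} [Fintype m]

section OneAddVecMulVec

variable [DecidableEq m]

theorem det_one_add_vecMulVec {R : Type*} [CommRing R] (u v : m → R) :
    (1 + vecMulVec u v).det = 1 + v ⬝ᵥ u := by
  rw [vecMulVec_eq Unit, det_one_add_replicateCol_mul_replicateRow]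

theorem inv_one_add_vecMulVec {K : Type*} [Field K] {u v : m → K} (h : 1 + v ⬝ᵥ u ≠ 0) :
    (1 + vecMulVec u v)⁻¹ = 1 - (1 + v ⬝ᵥ u)⁻¹ • vecMulVec u v := by
  refine inv_eq_right_inv ?_
  have hsq : vecMulVec u v * vecMulVec u v = (v ⬝ᵥ u) • vecMulVec u v := by
    rw [vecMulVec_mul_vecMulVec, vecMulVec_smul]
  have hcoeff : (1 + v ⬝ᵥ u)⁻¹ + (1 + v ⬝ᵥ u)⁻¹ * (v ⬝ᵥ u) = 1 := by field_simp
  rw [mul_sub, mul_one, Matrix.mul_smul, add_mul, one_mul, smul_add, hsq, smul_smul,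
    ← add_smul, hcoeff, one_smul, add_sub_cancel_right]

theorem trace_inv_one_add_vecMulVec {K : Type*} [Field K] {u v : m → K} (h : 1 + v ⬝ᵥ u ≠ 0) :
    (1 + vecMulVec u v)⁻¹.trace = Fintype.card m - v ⬝ᵥ u / (1 + v ⬝ᵥ u) := by
  rw [inv_one_add_vecMulVec h, trace_sub, trace_one, trace_smul, trace_vecMulVec, dotProduct_comm,
    smul_eq_mul, inv_mul_eq_div]

end OneAddVecMulVec

/-- Write `Q = ∑ vᵢ vᵢᴴ`; then `xᴴ Q x = ∑ |⟪vᵢ, x⟫|²` and Cauchy–Schwarz bounds each term by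
`‖vᵢ‖² ‖x‖²`, while `tr Q = ∑ ‖vᵢ‖²`. -/
theorem PosSemidef.re_star_dotProduct_mulVec_le_norm_sq_mul_trace {𝕜 : Type*} [RCLike 𝕜]
    {Q : Matrix m m 𝕜} (hQ : Q.PosSemidef) (x : EuclideanSpace 𝕜 m) :
    RCLike.re (star x.ofLp ⬝ᵥ Q *ᵥ x.ofLp) ≤ ‖x‖ ^ 2 * RCLike.re Q.trace := by
  obtain ⟨k, v, rfl⟩ := posSemidef_iff_eq_sum_vecMulVec.mp hQ
  simp only [sum_mulVec, dotProduct_sum, trace_sum, map_sum, Finset.mul_sum]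
  refine Finset.sum_le_sum fun i _ => ?_
  set y : EuclideanSpace 𝕜 m := WithLp.toLp 2 (v i)
  have hxy : star x.ofLp ⬝ᵥ v i = star ⟪y, x⟫_𝕜 := by
    rw [star_dotProduct, EuclideanSpace.inner_eq_star_dotProduct, dotProduct_comm]
  have hyy : v i ⬝ᵥ star (v i) = ⟪y, y⟫_𝕜 := rfl
  rw [trace_vecMulVec, vecMulVec_mulVec, op_smul_eq_smul, dotProduct_smul, smul_eq_mul,
    hxy, dotProduct_comm, ← EuclideanSpace.inner_eq_star_dotProduct, hyy,
    inner_self_eq_norm_sq_to_K, RCLike.star_def, RCLike.mul_conj]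
  norm_cast
  calc ‖⟪y, x⟫_𝕜‖ ^ 2 ≤ (‖y‖ * ‖x‖) ^ 2 := by gcongr; exact norm_inner_le_norm y x
    _ = ‖x‖ ^ 2 * ‖y‖ ^ 2 := by ring

end Matrix

theorem Real.log_one_add_sub_div_one_add_le_sq {x : ℝ} (hx : 0 ≤ x) :
    Real.log (1 + x) - x / (1 + x) ≤ x ^ 2 := by
  have hlog : Real.log (1 + x) ≤ x := by
    linarith [Real.log_le_sub_one_of_pos (by linarith : 0 < 1 + x)]
  have hgap : x - x / (1 + x) = x ^ 2 / (1 + x) := by field_simp; ring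
  have : x ^ 2 / (1 + x) ≤ x ^ 2 := div_le_self (sq_nonneg x) (by linarith)
  linarith

section RankOneChannel

variable {Na : ℕ}

theorem outer_eq_vecMulVec (u : EuclideanSpace ℂ (Fin Na)) :
    outer u = vecMulVec u.ofLp (star u.ofLp) :=
  rfl

theorem posSemidef_smul_outer {p : ℝ} (hp : 0 ≤ p) (u : EuclideanSpace ℂ (Fin Na)) :
    ((p : ℂ) • outer u).PosSemidef :=
  (posSemidef_vecMulVec_self_star _).smul (by exact_mod_cast hp)

theorem trace_smul_outer (p : ℝ) (u : EuclideanSpace ℂ (Fin Na)) :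
    ((p : ℂ) • outer u).trace = ((p * ‖u‖ ^ 2 : ℝ) : ℂ) := by
  rw [outer_eq_vecMulVec, trace_smul, trace_vecMulVec, ← EuclideanSpace.inner_eq_star_dotProduct,
    inner_self_eq_norm_sq_to_K]
  push_cast
  rfl

theorem star_dotProduct_smul_outer_mulVec (p : ℝ) (u v : EuclideanSpace ℂ (Fin Na)) :
    star u.ofLp ⬝ᵥ ((p : ℂ) • outer v) *ᵥ u.ofLp = ((p * ‖⟪u, v⟫_ℂ‖ ^ 2 : ℝ) : ℂ) := by
  have huv : star u.ofLp ⬝ᵥ v.ofLp = ⟪u, v⟫_ℂ := dotProduct_comm _ _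
  have hvu : star v.ofLp ⬝ᵥ u.ofLp = star ⟪u, v⟫_ℂ := by
    rw [← huv, star_dotProduct]
  rw [outer_eq_vecMulVec, smul_mulVec, vecMulVec_mulVec, op_smul_eq_smul, dotProduct_smul,
    dotProduct_smul, huv, hvu, smul_eq_mul, smul_eq_mul, Complex.star_def, Complex.conj_mul']
  push_cast
  ring

theorem inv_sq_smul_smul_outer_mul (σ l : ℝ) (u : EuclideanSpace ℂ (Fin Na))
    (Q : Matrix (Fin Na) (Fin Na) ℂ) :
    (σ ^ 2)⁻¹ • ((l : ℂ) • outer u * Q)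
      = vecMulVec (((l / σ ^ 2 : ℝ) : ℂ) • u.ofLp) (star u.ofLp ᵥ* Q) := by
  rw [outer_eq_vecMulVec, Matrix.smul_mul, vecMulVec_mul, ← smul_vecMulVec, ← smul_vecMulVec]
  congr 1
  ext i
  simp only [Pi.smul_apply, Complex.real_smul, smul_eq_mul]
  push_cast
  ring

theorem Rfun_smul_outer (σ l : ℝ) (u : EuclideanSpace ℂ (Fin Na))
    (Q : Matrix (Fin Na) (Fin Na) ℂ) :
    Rfun σ ((l : ℂ) • outer u) Q
      = Real.log (1 + l / σ ^ 2 * (star u.ofLp ⬝ᵥ Q *ᵥ u.ofLp).re) := by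
  rw [Rfun, inv_sq_smul_smul_outer_mul, det_one_add_vecMulVec, dotProduct_smul,
    ← dotProduct_mulVec, smul_eq_mul, Complex.add_re, Complex.one_re, Complex.re_ofReal_mul]

theorem Rfun_smul_outer_smul_outer_self (σ l p : ℝ) {u : EuclideanSpace ℂ (Fin Na)}
    (hu : ‖u‖ = 1) :
    Rfun σ ((l : ℂ) • outer u) ((p : ℂ) • outer u) = Real.log (1 + l / σ ^ 2 * p) := by
  rw [Rfun_smul_outer, star_dotProduct_smul_outer_mulVec, Complex.ofReal_re,
    inner_self_eq_norm_sq_to_K, hu]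
  norm_num

theorem Rfun_smul_outer_le (σ : ℝ) {l P : ℝ} (hl : 0 ≤ l) {u : EuclideanSpace ℂ (Fin Na)}
    (hu : ‖u‖ = 1) {Q : Matrix (Fin Na) (Fin Na) ℂ} (hQ : Q.PosSemidef) (hP : Q.trace.re ≤ P) :
    Rfun σ ((l : ℂ) • outer u) Q ≤ Real.log (1 + l * P / σ ^ 2) := by
  have hq_nonneg : 0 ≤ (star u.ofLp ⬝ᵥ Q *ᵥ u.ofLp).re :=
    (Complex.nonneg_iff.mp (hQ.dotProduct_mulVec_nonneg u.ofLp)).1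
  have hq_le : (star u.ofLp ⬝ᵥ Q *ᵥ u.ofLp).re ≤ P := by
    have h := hQ.re_star_dotProduct_mulVec_le_norm_sq_mul_trace u
    rw [hu, one_pow, one_mul] at h
    exact h.trans hP
  rw [Rfun_smul_outer]
  refine Real.log_le_log (by positivity) ?_
  calc 1 + l / σ ^ 2 * (star u.ofLp ⬝ᵥ Q *ᵥ u.ofLp).re ≤ 1 + l / σ ^ 2 * P := by gcongr
    _ = 1 + l * P / σ ^ 2 := by ring

theorem Rfun_le_sSup_of_feasible (σ : ℝ) {l P : ℝ} (hl : 0 ≤ l) {u : EuclideanSpace ℂ (Fin Na)}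
    (hu : ‖u‖ = 1) {C : Matrix (Fin Na) (Fin Na) ℂ → Prop} {Q₀ : Matrix (Fin Na) (Fin Na) ℂ}
    (hQ₀ : Q₀.PosSemidef) (hP : Q₀.trace.re ≤ P) (hC : C Q₀) :
    Rfun σ ((l : ℂ) • outer u) Q₀ ≤ sSup {r : ℝ | ∃ Q : Matrix (Fin Na) (Fin Na) ℂ,
      Q.PosSemidef ∧ Q.trace.re ≤ P ∧ C Q ∧ r = Rfun σ ((l : ℂ) • outer u) Q} := by
  refine le_csSup ⟨Real.log (1 + l * P / σ ^ 2), ?_⟩ ⟨Q₀, hQ₀, hP, hC, rfl⟩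
  rintro r ⟨Q, hQ, hQP, -, rfl⟩
  exact Rfun_smul_outer_le σ hl hu hQ hQP

theorem Dfun_smul_outer (σ : ℝ) {l : ℝ} (hl : 0 ≤ l) (u : EuclideanSpace ℂ (Fin Na))
    {Q : Matrix (Fin Na) (Fin Na) ℂ} (hQ : Q.PosSemidef) {y : ℝ}
    (hy : l / σ ^ 2 * (star u.ofLp ⬝ᵥ Q *ᵥ u.ofLp).re = y) :
    Dfun σ ((l : ℂ) • outer u) Q = Real.log (1 + y) - y / (1 + y) := by
  have hq_nonneg := hQ.dotProduct_mulVec_nonneg u.ofLp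
  have hq : star u.ofLp ⬝ᵥ Q *ᵥ u.ofLp = ((star u.ofLp ⬝ᵥ Q *ᵥ u.ofLp).re : ℂ) :=
    Complex.eq_re_of_ofReal_le (r := 0) (by exact_mod_cast hq_nonneg)
  have hy_nonneg : 0 ≤ y := hy ▸ mul_nonneg (by positivity) (Complex.nonneg_iff.mp hq_nonneg).1
  have hdot : (star u.ofLp ᵥ* Q) ⬝ᵥ (((l / σ ^ 2 : ℝ) : ℂ) • u.ofLp) = (y : ℂ) := by
    rw [dotProduct_smul, ← dotProduct_mulVec, smul_eq_mul, hq, ← hy]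
    push_cast
    rfl
  have hy1 : (1 : ℂ) + y ≠ 0 := by exact_mod_cast (by positivity : (1 : ℝ) + y ≠ 0)
  rw [Dfun, inv_sq_smul_smul_outer_mul, det_one_add_vecMulVec,
    trace_inv_one_add_vecMulVec (hdot ▸ hy1), hdot]
  norm_cast
  rw [Fintype.card_fin]
  ring

theorem mul_Dfun_smul_outer_le (n : ℕ) (σ : ℝ) {l p δ : ℝ} (hl : 0 ≤ l) (hp : 0 ≤ p)
    (uw ub : EuclideanSpace ℂ (Fin Na))
    (hsnr : l / σ ^ 2 * (p * ‖⟪uw, ub⟫_ℂ‖ ^ 2) * Real.sqrt n ≤ Real.sqrt 2 * δ) :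
    (n : ℝ) * Dfun σ ((l : ℂ) • outer uw) ((p : ℂ) • outer ub) ≤ 2 * δ ^ 2 := by
  set y := l / σ ^ 2 * (p * ‖⟪uw, ub⟫_ℂ‖ ^ 2)
  have hy : 0 ≤ y := by positivity
  rw [Dfun_smul_outer σ hl uw (posSemidef_smul_outer hp ub)
    (by rw [star_dotProduct_smul_outer_mulVec, Complex.ofReal_re])]
  calc (n : ℝ) * (Real.log (1 + y) - y / (1 + y)) ≤ n * y ^ 2 := by
        gcongr
        exact Real.log_one_add_sub_div_one_add_le_sq hy
    _ = (y * Real.sqrt n) ^ 2 := by rw [mul_pow y, Real.sq_sqrt (Nat.cast_nonneg n), mul_comm]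
    _ ≤ (Real.sqrt 2 * δ) ^ 2 := by gcongr
    _ = 2 * δ ^ 2 := by rw [mul_pow, Real.sq_sqrt zero_le_two]

end RankOneChannel

theorem unit_rank_achievability_general (Na n : ℕ) (hn : 1 ≤ n)
    (σb σw lb lw δ P : ℝ) (hσw : 0 < σw) (hlb : 0 < lb) (hlw : 0 < lw)
    (hδ : 0 < δ) (hP : 0 < P)
    (ub uw : EuclideanSpace ℂ (Fin Na)) (hub : ‖ub‖ = 1)
    (hc : 0 < ‖(⟪uw, ub⟫_ℂ)‖ ^ 2) :
    min (Real.log (1 + Real.sqrt 2 * σw ^ 2 * δ * lb /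
          (σb ^ 2 * lw * ‖(⟪uw, ub⟫_ℂ)‖ ^ 2 * Real.sqrt n)))
        (Real.log (1 + lb * P / σb ^ 2))
      ≤ sSup {r : ℝ | ∃ Q : Matrix (Fin Na) (Fin Na) ℂ, Q.PosSemidef ∧
          (Q.trace).re ≤ P ∧
          (n : ℝ) * Dfun σw ((lw : ℂ) • outer uw) Q ≤ 2 * δ ^ 2 ∧
          r = Rfun σb ((lb : ℂ) • outer ub) Q} := by
  set c := ‖(⟪uw, ub⟫_ℂ)‖ ^ 2
  have hsqrt_n : 0 < Real.sqrt n := Real.sqrt_pos.mpr (by exact_mod_cast hn)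
  set p₀ := Real.sqrt 2 * σw ^ 2 * δ / (lw * c * Real.sqrt n)
  set p := min P p₀
  have hp : 0 ≤ p := le_min hP.le (by positivity)
  have hsnr : lw / σw ^ 2 * (p * c) * Real.sqrt n ≤ Real.sqrt 2 * δ := calc
    _ ≤ lw / σw ^ 2 * (p₀ * c) * Real.sqrt n := by gcongr; exact min_le_right P p₀
    _ = Real.sqrt 2 * δ := by simp only [p₀]; field_simp
  have htrace : ((p : ℂ) • outer ub).trace.re ≤ P := by
    rw [trace_smul_outer, Complex.ofReal_re, hub, one_pow, mul_one]
    exact min_le_left P p₀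
  have hrate := Rfun_le_sSup_of_feasible σb hlb.le hub (posSemidef_smul_outer hp ub) htrace
    (C := fun Q => (n : ℝ) * Dfun σw ((lw : ℂ) • outer uw) Q ≤ 2 * δ ^ 2)
    (mul_Dfun_smul_outer_le n σw hlw.le hp uw ub hsnr)
  rw [Rfun_smul_outer_smul_outer_self σb lb p hub] at hrate
  refine le_trans ?_ hrate
  rcases le_total P p₀ with h | h
  · rw [show p = P from min_eq_left h]
    exact (min_le_right _ _).trans_eq (by ring_nf)
  · rw [show p = p₀ from min_eq_right h]
    exact (min_le_left _ _).trans_eq (by simp only [p₀]; ring_nf)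

/-- **Unit-rank channels, achievability (Theorem 3, lower bound).**
For unit-rank Bob and Willie Gram matrices `W_b = lb • u_b u_bᴴ`, `W_w = lw • u_w u_wᴴ`
(with eigenvalues `lb = λ_b`, `lw = λ_w`) and `c = |⟨u_w, u_b⟩|² > 0`, the `δ`-PD constrained
capacity is at least the minimum of `log(1 + √2·σ_w²·δ·λ_b/(σ_b²·λ_w·c·√n))` and the
unconstrained capacity `log(1 + λ_b·P/σ_b²)`. -/
theorem unit_rank_achievability (Na n : ℕ) (hNa : 1 ≤ Na) (hn : 1 ≤ n)
    (σb σw lb lw δ P : ℝ) (hσb : 0 < σb) (hσw : 0 < σw) (hlb : 0 < lb) (hlw : 0 < lw)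
    (hδ : 0 < δ) (hP : 0 < P)
    (ub uw : EuclideanSpace ℂ (Fin Na)) (hub : ‖ub‖ = 1) (huw : ‖uw‖ = 1)
    (hc : 0 < ‖(⟪uw, ub⟫_ℂ)‖ ^ 2) :
    min (Real.log (1 + Real.sqrt 2 * σw ^ 2 * δ * lb /
          (σb ^ 2 * lw * ‖(⟪uw, ub⟫_ℂ)‖ ^ 2 * Real.sqrt n)))
        (Real.log (1 + lb * P / σb ^ 2))
      ≤ sSup {r : ℝ | ∃ Q : Matrix (Fin Na) (Fin Na) ℂ, Q.PosSemidef ∧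
          (Q.trace).re ≤ P ∧
          (n : ℝ) * Dfun σw ((lw : ℂ) • outer uw) Q ≤ 2 * δ ^ 2 ∧
          r = Rfun σb ((lb : ℂ) • outer ub) Q} :=
  unit_rank_achievability_general Na n hn σb σw lb lw δ P hσw hlb hlw hδ hP ub uw hub hc
end

section
/- Concentration of the angle between random unit vectors (Lemma 1): There exists a universal constant K > 0 such that for every integer p ≥ 2, every ζ ∈ (0, π/2), and every unit vector a ∈ ℝ^p, the uniform (rotation-invariant) probability measure μ_p on the unit sphere of ℝ^p satisfies μ_p { b : |Real.arccos ⟨a, b⟩ − π/2| ≤ ζ } ≥ 1 − K·√p·(Real.cos ζ)^{p−2}. -/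
/-!
For a unit vector `a`, the event `|⟪a, b⟫| > sin ζ` is the double cone of half-angle `π/2 - ζ`
around `a`, and on the sphere its complement lies in the event of the theorem. For any two
rotation-invariant probability measures `μ, ν` without an atom at the origin, integrating the
indicator of the symmetric relation `{(v, x) | x ∈ doubleCone s v}` against `ν.prod μ` in both
orders shows that `μ` and `ν` give double cones the same mass. Taking for `ν` the standard
Gaussian, the cone around the first basis vector is `{g | s ‖g‖ < |g₀|}`, on which
`g₀² - s² ‖g‖² ≥ 0`; since the coordinates are independent and
`∫ exp (κ x²) dγ(x) = (1 - 2κ)^(-1/2)` for `κ < 1/2`, a Chernoff bound bounds its mass by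
`√p (cos ζ)^(p-1) (1 + 1/(p-1))^((p-1)/2) ≤ 2 √p (cos ζ)^(p-2)`.
-/

open MeasureTheory ProbabilityTheory Real
open scoped InnerProductSpace

section DoubleCone

variable {E : Type*} [NormedAddCommGroup E] [InnerProductSpace ℝ E]

def doubleCone (s : ℝ) (u : E) : Set E := {x | s * ‖u‖ * ‖x‖ < |⟪u, x⟫_ℝ|}

lemma mem_doubleCone_comm {s : ℝ} {u x : E} : x ∈ doubleCone s u ↔ u ∈ doubleCone s x := by
  simp only [doubleCone, Set.mem_ofPred_eq, real_inner_comm x u, mul_right_comm s ‖u‖]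

lemma doubleCone_smul (s : ℝ) (u : E) {r : ℝ} (hr : 0 < r) :
    doubleCone s (r • u) = doubleCone s u := by
  ext x
  simp only [doubleCone, Set.mem_ofPred_eq, norm_smul, Real.norm_of_nonneg hr.le,
    real_inner_smul_left, abs_mul, abs_of_pos hr]
  rw [show s * (r * ‖u‖) * ‖x‖ = r * (s * ‖u‖ * ‖x‖) by ring, mul_lt_mul_iff_right₀ hr]

lemma preimage_doubleCone (f : E ≃ₗᵢ[ℝ] E) (s : ℝ) (u : E) :
    f ⁻¹' doubleCone s u = doubleCone s (f.symm u) := by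
  ext x
  simp only [doubleCone, Set.mem_preimage, Set.mem_ofPred_eq, LinearIsometryEquiv.norm_map]
  rw [← f.inner_map_map (f.symm u) x, f.apply_symm_apply]

lemma sphere_subset_union_doubleCone {a : E} (ha : ‖a‖ = 1) {ζ : ℝ} (h₀ : -(π / 2) ≤ ζ)
    (h₁ : ζ ≤ π / 2) :
    Metric.sphere 0 1 ⊆ {b | |arccos ⟪a, b⟫_ℝ - π / 2| ≤ ζ} ∪ doubleCone (sin ζ) a := by
  intro b hb
  rw [mem_sphere_zero_iff_norm] at hb
  by_cases h : |⟪a, b⟫_ℝ| ≤ sin ζ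
  · left
    obtain ⟨hlow, hup⟩ := abs_le.1 h
    rw [Set.mem_ofPred_eq, arccos_eq_pi_div_two_sub_arcsin, sub_sub_cancel_left, abs_neg,
      abs_le]
    constructor
    · simpa [arcsin_neg, arcsin_sin h₀ h₁] using arcsin_le_arcsin hlow
    · simpa [arcsin_sin h₀ h₁] using arcsin_le_arcsin hup
  · exact Or.inr (by simpa [doubleCone, ha, hb] using h)

lemma exists_linearIsometryEquiv_apply_eq {u v : E} (h : ‖u‖ = ‖v‖) :
    ∃ f : E ≃ₗᵢ[ℝ] E, f u = v :=
  ⟨Submodule.reflection (ℝ ∙ (u - v))ᗮ, Submodule.reflection_sub h⟩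

variable [MeasurableSpace E] [BorelSpace E]

lemma measurableSet_doubleCone (s : ℝ) (u : E) : MeasurableSet (doubleCone s u) :=
  measurableSet_lt (by fun_prop) (by fun_prop)

lemma measure_doubleCone_eq_of_norm_eq {μ : Measure E} (hμ : ∀ f : E ≃ₗᵢ[ℝ] E, μ.map f = μ)
    (s : ℝ) {u v : E} (h : ‖u‖ = ‖v‖) : μ (doubleCone s u) = μ (doubleCone s v) := by
  obtain ⟨f, rfl⟩ := exists_linearIsometryEquiv_apply_eq h.symm
  conv_lhs => rw [← hμ f]
  rw [Measure.map_apply f.continuous.measurable (measurableSet_doubleCone s _),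
    preimage_doubleCone, f.symm_apply_apply]

lemma measure_doubleCone_eq_of_ne_zero {μ : Measure E} (hμ : ∀ f : E ≃ₗᵢ[ℝ] E, μ.map f = μ)
    (s : ℝ) {u v : E} (hu : u ≠ 0) (hv : v ≠ 0) : μ (doubleCone s u) = μ (doubleCone s v) := by
  rw [← doubleCone_smul s u (inv_pos.2 (norm_pos_iff.2 hu)),
    ← doubleCone_smul s v (inv_pos.2 (norm_pos_iff.2 hv))]
  refine measure_doubleCone_eq_of_norm_eq hμ s ?_
  simp [norm_smul, hu, hv]

lemma lintegral_measure_doubleCone {μ ν : Measure E} [IsProbabilityMeasure ν]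
    (hμ : ∀ f : E ≃ₗᵢ[ℝ] E, μ.map f = μ) (hν : ν {0} = 0) (s : ℝ) {u : E} (hu : u ≠ 0) :
    ∫⁻ v, μ (doubleCone s v) ∂ν = μ (doubleCone s u) := by
  have : ∀ᵐ v ∂ν, μ (doubleCone s v) = μ (doubleCone s u) := by
    filter_upwards [measure_eq_zero_iff_ae_notMem.1 hν] with v hv
    exact measure_doubleCone_eq_of_ne_zero hμ s hv hu
  rw [lintegral_congr_ae this, lintegral_const, measure_univ, mul_one]

lemma measure_doubleCone_eq_of_invariant [SecondCountableTopology E] {μ ν : Measure E}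
    [IsProbabilityMeasure μ] [IsProbabilityMeasure ν] (hμ : ∀ f : E ≃ₗᵢ[ℝ] E, μ.map f = μ)
    (hν : ∀ f : E ≃ₗᵢ[ℝ] E, ν.map f = ν) (hμ₀ : μ {0} = 0) (hν₀ : ν {0} = 0) (s : ℝ)
    {u v : E} (hu : u ≠ 0) (hv : v ≠ 0) : μ (doubleCone s u) = ν (doubleCone s v) := by
  have hT : MeasurableSet {q : E × E | q.2 ∈ doubleCone s q.1} :=
    show MeasurableSet {q : E × E | s * ‖q.1‖ * ‖q.2‖ < |⟪q.1, q.2⟫_ℝ|} from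
      measurableSet_lt (by fun_prop) (by fun_prop)
  calc μ (doubleCone s u) = ∫⁻ w, μ (doubleCone s w) ∂ν :=
        (lintegral_measure_doubleCone hμ hν₀ s hu).symm
    _ = (ν.prod μ) {q | q.2 ∈ doubleCone s q.1} := (Measure.prod_apply hT).symm
    _ = ∫⁻ x, ν (doubleCone s x) ∂μ := by
        simp only [Measure.prod_apply_symm hT, Set.preimage_ofPred_eq, mem_doubleCone_comm,
          Set.ofPred_mem_eq]
    _ = ν (doubleCone s v) := lintegral_measure_doubleCone hν hμ₀ s hv

end DoubleCone

lemma gaussianPDFReal_mul_exp_mul_sq (κ x : ℝ) :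
    gaussianPDFReal 0 1 x * rexp (κ * x ^ 2) = (√(2 * π))⁻¹ * rexp (-(1 / 2 - κ) * x ^ 2) := by
  simp only [gaussianPDFReal, NNReal.coe_one, mul_one, sub_zero, mul_assoc, ← Real.exp_add]
  ring_nf

lemma integrable_exp_mul_sq_gaussianReal {κ : ℝ} (hκ : κ < 1 / 2) :
    Integrable (fun x ↦ rexp (κ * x ^ 2)) (gaussianReal 0 1) := by
  rw [gaussianReal_of_var_ne_zero _ one_ne_zero, integrable_withDensity_iff_integrable_smul'
    (measurable_gaussianPDF 0 1) (ae_of_all _ fun _ ↦ gaussianPDF_lt_top)]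
  simp_rw [toReal_gaussianPDF, smul_eq_mul, gaussianPDFReal_mul_exp_mul_sq]
  exact (integrable_exp_neg_mul_sq (by linarith)).const_mul _

lemma integral_exp_mul_sq_gaussianReal {κ : ℝ} (hκ : κ < 1 / 2) :
    ∫ x, rexp (κ * x ^ 2) ∂gaussianReal 0 1 = (√(1 - 2 * κ))⁻¹ := by
  simp_rw [integral_gaussianReal_eq_integral_smul one_ne_zero, smul_eq_mul,
    gaussianPDFReal_mul_exp_mul_sq, integral_const_mul, integral_gaussian]
  rw [← sqrt_inv, ← sqrt_mul (by positivity), ← sqrt_inv]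
  have : 1 - 2 * κ ≠ 0 := by linarith
  field_simp

section StdGaussian

variable {ι : Type*} [Fintype ι]

lemma integrable_exp_sum_mul_sq_stdGaussian {κ : ι → ℝ} (hκ : ∀ i, κ i < 1 / 2) :
    Integrable (fun x ↦ rexp (∑ i, κ i * x i ^ 2)) (stdGaussian (EuclideanSpace ℝ ι)) := by
  rw [← map_pi_eq_stdGaussian, integrable_map_measure (by fun_prop) (by fun_prop)]
  simp_rw [Function.comp_def, Real.exp_sum]
  exact Integrable.fintype_prod (f := fun i t ↦ rexp (κ i * t ^ 2))
    fun i ↦ integrable_exp_mul_sq_gaussianReal (hκ i)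

lemma integral_exp_sum_mul_sq_stdGaussian {κ : ι → ℝ} (hκ : ∀ i, κ i < 1 / 2) :
    ∫ x, rexp (∑ i, κ i * x i ^ 2) ∂stdGaussian (EuclideanSpace ℝ ι)
      = ∏ i, (√(1 - 2 * κ i))⁻¹ := by
  rw [← map_pi_eq_stdGaussian, integral_map (by fun_prop) (by fun_prop)]
  simp_rw [Real.exp_sum]
  rw [integral_fintype_prod_eq_prod (f := fun i t ↦ rexp (κ i * t ^ 2))]
  exact Finset.prod_congr rfl fun i _ ↦ integral_exp_mul_sq_gaussianReal (hκ i)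

lemma stdGaussian_singleton_zero [Nonempty ι] : stdGaussian (EuclideanSpace ℝ ι) {0} = 0 := by
  rw [← map_pi_eq_stdGaussian, Measure.map_apply (by fun_prop) (measurableSet_singleton 0)]
  have : (WithLp.toLp 2 : (ι → ℝ) → EuclideanSpace ℝ ι) ⁻¹' {0} = {0} := by
    ext x
    simp
  rw [this]
  have := nullSingletonClass_gaussianReal (μ := 0) one_ne_zero
  exact measure_singleton 0

variable [DecidableEq ι]

lemma doubleCone_single (s : ℝ) (i₀ : ι) :
    doubleCone s (EuclideanSpace.single i₀ (1 : ℝ)) = {g | s * ‖g‖ < |g i₀|} := by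
  ext g
  simp [doubleCone, EuclideanSpace.inner_single_left]

lemma stdGaussian_real_doubleCone_single_le (i₀ : ι) {s t : ℝ} (hs : 0 ≤ s) (ht : 0 ≤ t)
    (hts : 2 * t * (1 - s ^ 2) < 1) :
    (stdGaussian (EuclideanSpace ℝ ι)).real (doubleCone s (EuclideanSpace.single i₀ 1))
      ≤ (√(1 - 2 * t * (1 - s ^ 2)))⁻¹ * (√(1 + 2 * t * s ^ 2))⁻¹ ^ (Fintype.card ι - 1) := by
  set κ : ι → ℝ := fun i ↦ t * ((if i = i₀ then 1 else 0) - s ^ 2)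
  have hκ : ∀ i, κ i < 1 / 2 := by
    intro i
    by_cases hi : i = i₀ <;> simp only [κ, hi, if_true, if_false] <;> nlinarith
  have hQ (g : EuclideanSpace ℝ ι) : ∑ i, κ i * g i ^ 2 = t * (g i₀ ^ 2 - s ^ 2 * ‖g‖ ^ 2) := by
    simp [κ, EuclideanSpace.real_norm_sq_eq, mul_sub, sub_mul, Finset.sum_sub_distrib,
      Finset.mul_sum, ite_mul, mul_assoc]
  have hcone : doubleCone s (EuclideanSpace.single i₀ 1)
      ⊆ {g | 1 ≤ rexp (∑ i, κ i * g i ^ 2)} := by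
    intro g hg
    rw [doubleCone_single] at hg
    rw [Set.mem_ofPred_eq, one_le_exp_iff, hQ]
    have : (s * ‖g‖) ^ 2 ≤ g i₀ ^ 2 := by
      rw [← sq_abs (g i₀)]
      exact pow_le_pow_left₀ (by positivity) hg.le 2
    nlinarith
  calc _ ≤ _ := measureReal_mono hcone
    _ = 1 * _ := (one_mul _).symm
    _ ≤ ∫ g, rexp (∑ i, κ i * g i ^ 2) ∂stdGaussian (EuclideanSpace ℝ ι) :=
      mul_meas_ge_le_integral_of_nonneg (ae_of_all _ fun _ ↦ (exp_pos _).le)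
        (integrable_exp_sum_mul_sq_stdGaussian hκ) 1
    _ = _ := by
      rw [integral_exp_sum_mul_sq_stdGaussian hκ, ← Finset.mul_prod_erase _ _ (Finset.mem_univ i₀),
        Finset.prod_congr rfl (g := fun _ ↦ (√(1 + 2 * t * s ^ 2))⁻¹), Finset.prod_const,
        Finset.card_erase_of_mem (Finset.mem_univ i₀), Finset.card_univ]
      · simp [κ, mul_assoc]
      · intro i hi
        simp [κ, Finset.ne_of_mem_erase hi, mul_assoc]

end StdGaussian

lemma inv_sqrt_pow_le_two_mul_pow {n : ℕ} {c x : ℝ} (hc₀ : 0 < c) (hc₁ : c ≤ 1)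
    (hx : (n + 1) / ((n + 2) * c ^ 2) ≤ x) : (√x)⁻¹ ^ (n + 1) ≤ 2 * c ^ n := by
  have hx₀ : 0 < x := lt_of_lt_of_le (by positivity) hx
  have key : ((√x)⁻¹ ^ (n + 1)) ^ 2 ≤ (1 + ((n + 1 : ℕ) : ℝ)⁻¹) ^ (n + 1) * (c ^ (n + 1)) ^ 2 := by
    rw [← pow_mul, mul_comm, pow_mul, inv_pow, sq_sqrt hx₀.le, ← pow_mul, mul_comm (n + 1),
      pow_mul, ← mul_pow]
    refine pow_le_pow_left₀ (by positivity) ?_ _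
    calc x⁻¹ ≤ ((n + 1) / ((n + 2) * c ^ 2))⁻¹ := inv_anti₀ (by positivity) hx
      _ = _ := by push_cast; field_simp; ring
  have hexp : (1 + ((n + 1 : ℕ) : ℝ)⁻¹) ^ (n + 1) ≤ 4 :=
    one_add_inv_pow_le_exp.trans (exp_one_lt_d9.le.trans (by norm_num))
  have hc : c ^ (n + 1) ≤ c ^ n := pow_le_pow_of_le_one hc₀.le hc₁ n.le_succ
  refine (pow_le_pow_iff_left₀ (by positivity) (by positivity) two_ne_zero).1 ?_
  calc _ ≤ _ := key
    _ ≤ 4 * (c ^ n) ^ 2 := by gcongr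
    _ = (2 * c ^ n) ^ 2 := by ring

lemma stdGaussian_real_doubleCone_single_le_two_mul {ι : Type*} [Fintype ι] [DecidableEq ι]
    (i₀ : ι) (hι : 2 ≤ Fintype.card ι) {s c : ℝ} (hs : 0 ≤ s) (hc : 0 < c)
    (hsc : s ^ 2 + c ^ 2 = 1) :
    (stdGaussian (EuclideanSpace ℝ ι)).real (doubleCone s (EuclideanSpace.single i₀ 1))
      ≤ 2 * √(Fintype.card ι) * c ^ (Fintype.card ι - 2) := by
  obtain ⟨n, hn⟩ : ∃ n, Fintype.card ι = n + 2 := ⟨_, (Nat.sub_add_cancel hι).symm⟩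
  -- chosen so that the factor coming from the axis coordinate is exactly `√(n + 2)`
  set t : ℝ := (n + 1) / (2 * (n + 2) * c ^ 2)
  have haxis : 1 - 2 * t * (1 - s ^ 2) = (n + 2 : ℝ)⁻¹ := by
    rw [show 1 - s ^ 2 = c ^ 2 by linarith]
    simp only [t]
    field_simp
    ring
  have hbound := stdGaussian_real_doubleCone_single_le i₀ hs (t := t) (by positivity)
    (by rw [← sub_pos, haxis]; positivity)
  rw [haxis, sqrt_inv, inv_inv, hn, show n + 2 - 1 = n + 1 by omega] at hbound
  rw [hn, Nat.add_sub_cancel]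
  push_cast
  calc _ ≤ _ := hbound
    _ ≤ √(n + 2) * (2 * c ^ n) := by
      gcongr
      refine inv_sqrt_pow_le_two_mul_pow hc (by nlinarith) ?_
      have : 1 + 2 * t * s ^ 2 - (n + 1) / ((n + 2) * c ^ 2) = (n + 2 : ℝ)⁻¹ := by
        simp only [t]
        field_simp
        linear_combination (n + 1 : ℝ) * hsc
      linarith [inv_pos.2 (by positivity : (0 : ℝ) < n + 2)]
    _ = _ := by ring

/-- **Concentration of the angle between random unit vectors (Lemma 1).**
For the uniform (rotation-invariant) probability measure on the unit sphere of `ℝ^p` and any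
fixed unit vector `a`, the angle `arccos ⟨a, b⟩` lies within `ζ` of `π/2` with probability at
least `1 − K·√p·(cos ζ)^{p−2}`, for a universal constant `K`. -/
theorem angle_concentration_random_unit_vectors :
    ∃ K : ℝ, 0 < K ∧
      ∀ (p : ℕ), 2 ≤ p → ∀ ζ : ℝ, 0 < ζ → ζ < Real.pi / 2 →
      ∀ a : EuclideanSpace ℝ (Fin p), ‖a‖ = 1 →
      ∀ μ : Measure (EuclideanSpace ℝ (Fin p)), IsProbabilityMeasure μ →
        μ (Metric.sphere (0 : EuclideanSpace ℝ (Fin p)) 1) = 1 →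
        (∀ f : EuclideanSpace ℝ (Fin p) ≃ₗᵢ[ℝ] EuclideanSpace ℝ (Fin p),
          Measure.map f μ = μ) →
        1 - K * Real.sqrt p * Real.cos ζ ^ (p - 2)
          ≤ (μ {b : EuclideanSpace ℝ (Fin p) |
              |Real.arccos ⟪a, b⟫_ℝ - Real.pi / 2| ≤ ζ}).toReal := by
  refine ⟨2, two_pos, fun p hp ζ hζ₀ hζ a ha μ hμ hμS hμinv ↦ ?_⟩
  have hs : 0 ≤ sin ζ := sin_nonneg_of_nonneg_of_le_pi hζ₀.le (by linarith [pi_pos])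
  have hc : 0 < cos ζ := cos_pos_of_mem_Ioo ⟨by linarith [pi_pos], hζ⟩
  have i₀ : Fin p := ⟨0, by omega⟩
  have : Nonempty (Fin p) := ⟨i₀⟩
  have hμ₀ : μ {0} = 0 := measure_mono_null (by simp)
    ((prob_compl_eq_zero_iff Metric.isClosed_sphere.measurableSet).2 hμS)
  have hcone : μ.real (doubleCone (sin ζ) a) ≤ 2 * √p * cos ζ ^ (p - 2) := by
    rw [measureReal_def, measure_doubleCone_eq_of_invariant hμinv (fun f ↦ stdGaussian_map f) hμ₀
      stdGaussian_singleton_zero _ (norm_ne_zero_iff.1 (by rw [ha]; exact one_ne_zero))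
      (by simp : EuclideanSpace.single i₀ (1 : ℝ) ≠ 0), ← measureReal_def]
    simpa using stdGaussian_real_doubleCone_single_le_two_mul i₀ (by simpa using hp) hs hc
      (sin_sq_add_cos_sq ζ)
  have hcover := sphere_subset_union_doubleCone ha (by linarith [pi_pos]) hζ.le
  have hsphere : μ.real (Metric.sphere 0 1) = 1 := by rw [measureReal_def, hμS, ENNReal.toReal_one]
  change _ ≤ μ.real _
  linarith [measureReal_mono (μ := μ) hcover, measureReal_union_le (μ := μ)
    {b | |arccos ⟪a, b⟫_ℝ - π / 2| ≤ ζ} (doubleCone (sin ζ) a)]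
end

section
/- Detection functional of a scaled projection (computation underlying Appendix F): Let N_a ≥ 1, σ_w > 0, γ > 0, a ≥ 0, and let Π be an N_a×N_a complex Hermitian idempotent matrix (orthogonal projection) of rank r. Set Q := a • Π and x := γ·a/σ_w². Then D(γ·1, Q) = r · (Real.log(1 + x) + 1/(1 + x) − 1); in particular, if n·r·x² ≤ 2δ² for reals n ≥ 1 and δ ≥ 0, then n·D(γ·1, Q) ≤ 2δ². -/
/-! With `x = γa/σ_w²` the matrix inside `D` is `1 + x Π`. The eigenvalues of the Hermitian
idempotent `Π` lie in `{0, 1}`, and exactly `r` of them are nonzero, so `det (1 + x Π) = (1 + x)^r`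
and `tr Π = r`; idempotency also gives `(1 + x Π)⁻¹ = 1 - x/(1 + x) Π`. This yields the closed
form, and the bound follows from `log (1 + x) ≤ x` and `1/(1 + x) ≤ 1 - x + x²`. -/

open Matrix
open scoped ComplexOrder

namespace Matrix

variable {n : Type*} [Fintype n] [DecidableEq n]

theorem det_conjStarAlgAut_s15 {R : Type*} [CommRing R] [StarRing R] (u : unitary (Matrix n n R))
    (M : Matrix n n R) : (Unitary.conjStarAlgAut R _ u M).det = M.det := by
  rw [Unitary.conjStarAlgAut_apply, det_mul_right_comm, Unitary.mul_star_self_of_mem u.prop,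
    one_mul]

theorem inv_one_add_smul_of_isIdempotentElem {K : Type*} [Field K] {P : Matrix n n K}
    (hP : IsIdempotentElem P) {c : K} (hc : 1 + c ≠ 0) :
    (1 + c • P)⁻¹ = 1 - (c / (1 + c)) • P := by
  refine inv_eq_right_inv ?_
  have hcoeff : c - (c / (1 + c) + c * (c / (1 + c))) = 0 := by
    field_simp
    ring
  rw [mul_sub, mul_one, add_mul, one_mul, smul_mul_smul_comm, hP.eq, add_sub_assoc,
    ← add_smul, ← sub_smul, hcoeff, zero_smul, add_zero]

namespace IsHermitian

variable {𝕜 : Type*} [RCLike 𝕜] {A : Matrix n n 𝕜}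

theorem det_one_add_smul (hA : A.IsHermitian) (c : 𝕜) :
    (1 + c • A).det = ∏ i, (1 + c * hA.eigenvalues i) := by
  conv_lhs => rw [hA.spectral_theorem,
    ← map_one (Unitary.conjStarAlgAut 𝕜 _ hA.eigenvectorUnitary), ← map_smul, ← map_add,
    det_conjStarAlgAut_s15]
  rw [← diagonal_one, ← diagonal_smul, diagonal_add, det_diagonal]
  rfl

theorem eigenvalues_eq_zero_or_one (hA : A.IsHermitian) (hP : IsIdempotentElem A) (i : n) :
    hA.eigenvalues i = 0 ∨ hA.eigenvalues i = 1 := by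
  simpa using hP.spectrum_subset ℝ (hA.spectrum_real_eq_range_eigenvalues ▸ Set.mem_range_self i)

theorem trace_eq_rank_of_isIdempotentElem (hA : A.IsHermitian) (hP : IsIdempotentElem A) :
    A.trace = A.rank := by
  rw [hA.trace_eq_sum_eigenvalues, hA.rank_eq_card_non_zero_eigs, Fintype.card_subtype,
    Finset.natCast_card_filter]
  refine Finset.sum_congr rfl fun i _ => ?_
  rcases hA.eigenvalues_eq_zero_or_one hP i with h | h <;> simp [h]

theorem det_one_add_smul_of_isIdempotentElem (hA : A.IsHermitian) (hP : IsIdempotentElem A)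
    (c : 𝕜) : (1 + c • A).det = (1 + c) ^ A.rank := by
  rw [hA.det_one_add_smul, hA.rank_eq_card_non_zero_eigs, Fintype.card_subtype,
    ← Finset.prod_const, Finset.prod_filter]
  refine Finset.prod_congr rfl fun i _ => ?_
  rcases hA.eigenvalues_eq_zero_or_one hP i with h | h <;> simp [h]

end IsHermitian

end Matrix

theorem Real.log_one_add_add_one_div_sub_one_le_sq {x : ℝ} (hx : 0 ≤ x) :
    Real.log (1 + x) + 1 / (1 + x) - 1 ≤ x ^ 2 := by
  have hlog : Real.log (1 + x) ≤ x := by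
    linarith [Real.log_le_sub_one_of_pos (by linarith : 0 < 1 + x)]
  have hinv : 1 / (1 + x) ≤ 1 - x + x ^ 2 := by
    rw [div_le_iff₀ (by linarith)]
    nlinarith
  linarith

theorem Dfun_eq_of_smul_mul_eq_smul {Na : ℕ} {σw : ℝ} {W Q P : Matrix (Fin Na) (Fin Na) ℂ}
    (hP : P.IsHermitian) (hPP : IsIdempotentElem P) {x : ℝ} (hx : -1 < x)
    (hWQ : (σw ^ 2)⁻¹ • (W * Q) = (x : ℂ) • P) :
    Dfun σw W Q = P.rank * (Real.log (1 + x) + 1 / (1 + x) - 1) := by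
  have hx1 : 1 + x ≠ 0 := by linarith
  have hx1ℂ : (1 : ℂ) + x ≠ 0 := by exact_mod_cast hx1
  rw [Dfun, hWQ, hP.det_one_add_smul_of_isIdempotentElem hPP,
    inv_one_add_smul_of_isIdempotentElem hPP hx1ℂ, trace_sub, trace_smul, trace_one,
    hP.trace_eq_rank_of_isIdempotentElem hPP, Fintype.card_fin, smul_eq_mul]
  norm_cast
  rw [Real.log_pow]
  field_simp
  ring

theorem detection_of_scaled_projection_general (Na r : ℕ)
    (σw γ a : ℝ) (hγ : 0 < γ) (ha : 0 ≤ a)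
    (Pi : Matrix (Fin Na) (Fin Na) ℂ) (hherm : Pi.IsHermitian) (hidem : Pi * Pi = Pi)
    (hrank : Pi.rank = r)
    (x : ℝ) (hx : x = γ * a / σw ^ 2) :
    Dfun σw ((γ : ℂ) • (1 : Matrix (Fin Na) (Fin Na) ℂ)) ((a : ℂ) • Pi)
        = r * (Real.log (1 + x) + 1 / (1 + x) - 1) ∧
    ∀ n δ : ℝ, 1 ≤ n → 0 ≤ δ → n * r * x ^ 2 ≤ 2 * δ ^ 2 →
      n * Dfun σw ((γ : ℂ) • (1 : Matrix (Fin Na) (Fin Na) ℂ)) ((a : ℂ) • Pi)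
        ≤ 2 * δ ^ 2 := by
  have hx0 : 0 ≤ x := hx ▸ by positivity
  have hWQ : (σw ^ 2)⁻¹ • ((γ : ℂ) • (1 : Matrix (Fin Na) (Fin Na) ℂ) * (a : ℂ) • Pi)
      = (x : ℂ) • Pi := by
    rw [smul_mul_smul_comm, one_mul, ← Complex.coe_smul, smul_smul, hx]
    congr 1
    push_cast
    ring
  have hD := hrank ▸ Dfun_eq_of_smul_mul_eq_smul hherm hidem (by linarith) hWQ
  refine ⟨hD, fun n δ hn _ hle => ?_⟩
  calc n * Dfun σw ((γ : ℂ) • (1 : Matrix (Fin Na) (Fin Na) ℂ)) ((a : ℂ) • Pi)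
      ≤ n * (r * x ^ 2) := by
        rw [hD]
        gcongr
        exact Real.log_one_add_add_one_div_sub_one_le_sq hx0
    _ ≤ 2 * δ ^ 2 := by linarith

/-- **Detection functional of a scaled projection (Appendix F).**
For an orthogonal projection `Π` of rank `r`, `Q = a • Π` and `x = γ·a/σ_w²`:
`D(γ·1, Q) = r·(log(1+x) + 1/(1+x) − 1)`; in particular `n·r·x² ≤ 2δ²` implies
`n·D(γ·1, Q) ≤ 2δ²`. -/
theorem detection_of_scaled_projection (Na r : ℕ) (hNa : 1 ≤ Na)
    (σw γ a : ℝ) (hσw : 0 < σw) (hγ : 0 < γ) (ha : 0 ≤ a)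
    (Pi : Matrix (Fin Na) (Fin Na) ℂ) (hherm : Pi.IsHermitian) (hidem : Pi * Pi = Pi)
    (hrank : Pi.rank = r)
    (x : ℝ) (hx : x = γ * a / σw ^ 2) :
    Dfun σw ((γ : ℂ) • (1 : Matrix (Fin Na) (Fin Na) ℂ)) ((a : ℂ) • Pi)
        = r * (Real.log (1 + x) + 1 / (1 + x) - 1) ∧
    ∀ n δ : ℝ, 1 ≤ n → 0 ≤ δ → n * r * x ^ 2 ≤ 2 * δ ^ 2 →
      n * Dfun σw ((γ : ℂ) • (1 : Matrix (Fin Na) (Fin Na) ℂ)) ((a : ℂ) • Pi)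
        ≤ 2 * δ ^ 2 :=
  detection_of_scaled_projection_general Na r σw γ a hγ ha Pi hherm hidem hrank x hx
end
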